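/- arXiv:2412.16018 — 4 statements merged into one kernel-verified Lean document; each statement's English description precedes it below -/
import Mathlib

section
/- Let G be a graph and c : E(G) → {red, blue} a surjective edge colouring. Then c is a NAC-colouring (i.e., no cycle of G contains exactly one red edge or exactly one blue edge) if and only if every monochromatic component of c (a connected component of the subgraph spanned by the edges of one colour) is an induced subgraph of G. -/
/-! A cycle whose only edge of colour `b` is `pq` leaves a `!b`-coloured path from `q` back
to `p`, so the `!b`-component containing `p` and `q` is not induced. Conversely, if a
`b`-component misses an edge `uv` of `G`, then `uv` has colour `!b`, and closing a `b`-path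
from `u` to `v` with it gives a cycle with exactly one `!b`-edge. -/

open scoped Classical

namespace NAC

variable {V : Type*}

/-- Number of edges of `G` in the list `l` whose colour under `c` is `b`. -/
noncomputable def cCount (G : SimpleGraph V) (c : G.edgeSet → Bool) (b : Bool)
    (l : List (Sym2 V)) : ℕ :=
  (l.filter fun e => decide (∃ h : e ∈ G.edgeSet, c ⟨e, h⟩ = b)).length

/-- `c` is a NAC-colouring of `G`: it is surjective (both colours are used) and no
cycle of `G` contains exactly one edge of either colour. -/
def IsNAC (G : SimpleGraph V) (c : G.edgeSet → Bool) : Prop :=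
  Function.Surjective c ∧
  ∀ ⦃u : V⦄ (w : G.Walk u u), w.IsCycle →
    cCount G c true w.edges ≠ 1 ∧ cCount G c false w.edges ≠ 1

/-- The number of NAC-colourings of `G`, divided by two. -/
noncomputable def nacNum (G : SimpleGraph V) : ℕ :=
  {c : G.edgeSet → Bool | IsNAC G c}.ncard / 2

end NAC

namespace NAC

/-- The spanning subgraph of `G` consisting of the edges coloured `b` by `c`. -/
def monoSub (G : SimpleGraph V) (c : G.edgeSet → Bool) (b : Bool) : SimpleGraph V where
  Adj u v := ∃ h : G.Adj u v, c ⟨s(u, v), G.mem_edgeSet.mpr h⟩ = b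
  symm := by
    constructor
    rintro u v ⟨h, hc⟩
    refine ⟨h.symm, ?_⟩
    have : (⟨s(v, u), G.mem_edgeSet.mpr h.symm⟩ : G.edgeSet)
        = ⟨s(u, v), G.mem_edgeSet.mpr h⟩ := Subtype.ext Sym2.eq_swap
    rw [this]; exact hc
  loopless := by constructor; rintro u ⟨h, -⟩; exact G.irrefl h

variable {V : Type*} {G : SimpleGraph V} {c : G.edgeSet → Bool} {b : Bool}

lemma monoSub_le : monoSub G c b ≤ G := fun _ _ h => h.1

lemma mem_edgeSet_monoSub_iff {e : Sym2 V} :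
    e ∈ (monoSub G c b).edgeSet ↔ ∃ h : e ∈ G.edgeSet, c ⟨e, h⟩ = b := by
  induction e using Sym2.ind with
  | h u v => rfl

lemma mem_edgeSet_monoSub_not_iff {e : Sym2 V} (he : e ∈ G.edgeSet) :
    e ∈ (monoSub G c (!b)).edgeSet ↔ e ∉ (monoSub G c b).edgeSet := by
  simp [mem_edgeSet_monoSub_iff, he, Bool.eq_not_iff]

lemma adj_monoSub_not_iff {u v : V} (h : G.Adj u v) :
    (monoSub G c (!b)).Adj u v ↔ ¬(monoSub G c b).Adj u v := by
  simpa only [SimpleGraph.mem_edgeSet] using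
    mem_edgeSet_monoSub_not_iff (c := c) (b := b) (G.mem_edgeSet.2 h)

lemma cCount_eq_countP (l : List (Sym2 V)) :
    cCount G c b l = l.countP (· ∈ (monoSub G c b).edgeSet) := by
  simp [cCount, List.countP_eq_length_filter, mem_edgeSet_monoSub_iff]

lemma isNAC_iff : IsNAC G c ↔ Function.Surjective c ∧
    ∀ (b : Bool) ⦃u : V⦄ (w : G.Walk u u), w.IsCycle → cCount G c b w.edges ≠ 1 := by
  simp only [IsNAC, Bool.forall_bool]
  grind

lemma reachable_monoSub_not_of_cCount_eq_zero {x y : V} (w : G.Walk x y)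
    (h : cCount G c b w.edges = 0) : (monoSub G c (!b)).Reachable x y := by
  rw [cCount_eq_countP, List.countP_eq_zero] at h
  exact ⟨w.transfer _ fun e he =>
    (mem_edgeSet_monoSub_not_iff (w.edges_subset_edgeSet he)).2 (by simpa using h e he)⟩

lemma exists_adj_of_cCount_eq_one {x y : V} (w : G.Walk x y) (h : cCount G c b w.edges = 1) :
    ∃ p q, (monoSub G c b).Adj p q ∧
      (monoSub G c (!b)).Reachable x p ∧ (monoSub G c (!b)).Reachable q y := by
  induction w with
  | nil => simp [cCount] at h
  | @cons u v _ huv w ih =>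
    rw [SimpleGraph.Walk.edges_cons, cCount_eq_countP, List.countP_cons, ← cCount_eq_countP] at h
    by_cases hb : (monoSub G c b).Adj u v
    · have hw : cCount G c b w.edges = 0 := by simpa [hb] using h
      exact ⟨u, v, hb, .refl u, reachable_monoSub_not_of_cCount_eq_zero w hw⟩
    · have hw : cCount G c b w.edges = 1 := by simpa [hb] using h
      obtain ⟨p, q, hpq, hvp, hqy⟩ := ih hw
      exact ⟨p, q, hpq, ((adj_monoSub_not_iff huv).2 hb).reachable.trans hvp, hqy⟩

lemma exists_isCycle_cCount_eq_one {u v : V} (hr : (monoSub G c b).Reachable u v)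
    (hvu : (monoSub G c (!b)).Adj v u) :
    ∃ w : G.Walk v v, w.IsCycle ∧ cCount G c (!b) w.edges = 1 := by
  obtain ⟨p, hp⟩ := hr.exists_isPath
  have hvu' : ¬(monoSub G c b).Adj u v :=
    (adj_monoSub_not_iff (monoSub_le hvu).symm).1 hvu.symm
  refine ⟨.cons (monoSub_le hvu) (p.mapLe monoSub_le), ?_, ?_⟩
  · rw [SimpleGraph.Walk.cons_isCycle_iff, SimpleGraph.Walk.edges_mapLe_eq_edges]
    refine ⟨hp.mapLe monoSub_le, fun hmem => hvu' ?_⟩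
    simpa [Sym2.eq_swap] using p.edges_subset_edgeSet hmem
  · have hp0 : p.edges.countP (· ∈ (monoSub G c (!b)).edgeSet) = 0 :=
      List.countP_eq_zero.2 fun e he hne => by
        have heb := p.edges_subset_edgeSet he
        exact (mem_edgeSet_monoSub_not_iff (SimpleGraph.edgeSet_mono monoSub_le heb)).1
          (by simpa using hne) heb
    simp [cCount_eq_countP, hp0, hvu]

end NAC

open NAC in
/-- A surjective edge colouring is a NAC-colouring iff every monochromatic component is
an induced subgraph of `G`. -/
theorem statement0 {V : Type*} (G : SimpleGraph V) (c : G.edgeSet → Bool)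
    (hc : Function.Surjective c) :
    IsNAC G c ↔
      ∀ (b : Bool) (u v : V), (monoSub G c b).Reachable u v → G.Adj u v →
        (monoSub G c b).Adj u v := by
  rw [isNAC_iff]
  constructor
  · rintro ⟨-, hnac⟩ b u v hr huv
    by_contra hb
    obtain ⟨w, hw, hcount⟩ :=
      exists_isCycle_cCount_eq_one hr ((adj_monoSub_not_iff huv).2 hb).symm
    exact hnac _ w hw hcount
  · refine fun hind => ⟨hc, fun b u w _ hw => ?_⟩
    obtain ⟨p, q, hpq, hup, hqu⟩ := exists_adj_of_cCount_eq_one w hw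
    have hqp := hind (!b) q p (hqu.trans hup) (monoSub_le hpq).symm
    exact (adj_monoSub_not_iff (monoSub_le hpq).symm).1 hqp hpq.symm
end

section
/- No 2-tree on at least three vertices admits a NAC-colouring. -/
open scoped Classical

namespace NAC

variable {V : Type*}

lemma cCount_nil (G : SimpleGraph V) (c : G.edgeSet → Bool) (b : Bool) :
    cCount G c b [] = 0 := rfl

lemma cCount_cons (G : SimpleGraph V) (c : G.edgeSet → Bool) (b : Bool)
    {e : Sym2 V} (he : e ∈ G.edgeSet) (l : List (Sym2 V)) :
    cCount G c b (e :: l) = (if c ⟨e, he⟩ = b then 1 else 0) + cCount G c b l := by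
  unfold cCount
  rw [List.filter_cons]
  have : (∃ h : e ∈ G.edgeSet, c ⟨e, h⟩ = b) ↔ c ⟨e, he⟩ = b :=
    ⟨fun ⟨_, hq⟩ => hq, fun hq => ⟨he, hq⟩⟩
  by_cases h : c ⟨e, he⟩ = b
  · simp [this, h, he, Nat.add_comm]
  · simp [this, h, he]

lemma cCount_map {W : Type*} {G : SimpleGraph V} {G' : SimpleGraph W}
    (f : G →g G') (c' : G'.edgeSet → Bool) (b : Bool) (l : List (Sym2 V))
    (hl : ∀ e ∈ l, e ∈ G.edgeSet) :
    cCount G' c' b (l.map (Sym2.map f)) =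
      cCount G (fun e => c' (f.mapEdgeSet e)) b l := by
  unfold cCount
  rw [List.filter_map, List.length_map]
  congr 1
  apply List.filter_congr
  intro e he
  have hG : e ∈ G.edgeSet := hl e he
  have hG' : Sym2.map f e ∈ G'.edgeSet := f.map_mem_edgeSet hG
  simp only [Function.comp_apply]
  apply decide_eq_decide.mpr
  exact ⟨fun ⟨_, hq⟩ => ⟨hG, hq⟩, fun ⟨_, hq⟩ => ⟨hG', hq⟩⟩

lemma triangle_mono {G : SimpleGraph V} {c : G.edgeSet → Bool}
    (hc : ∀ ⦃u : V⦄ (w : G.Walk u u), w.IsCycle →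
      cCount G c true w.edges ≠ 1 ∧ cCount G c false w.edges ≠ 1)
    {a b d : V} (hab : G.Adj a b) (hbd : G.Adj b d) (hda : G.Adj d a) :
    c ⟨s(a,b), hab⟩ = c ⟨s(b,d), hbd⟩ ∧ c ⟨s(a,b), hab⟩ = c ⟨s(d,a), hda⟩ := by
  have hne1 : a ≠ b := hab.ne
  have hne2 : b ≠ d := hbd.ne
  have hne3 : d ≠ a := hda.ne
  set w : G.Walk a a := .cons hab (.cons hbd (.cons hda .nil)) with hw
  have hcyc : w.IsCycle := by
    refine ⟨⟨⟨?_⟩, ?_⟩, ?_⟩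
    · simp [hw, hne1, hne2, hne3, Sym2.eq_iff]
      tauto
    · rw [hw]; simp
    · simp [hw]
      exact ⟨⟨hne2, fun h => hne1 h.symm⟩, hne3⟩
  have hedges : w.edges = [s(a,b), s(b,d), s(d,a)] := by simp [hw]
  have h1 := hc w hcyc
  rw [hedges] at h1
  rw [cCount_cons G c true hab, cCount_cons G c true hbd, cCount_cons G c true hda,
      cCount_nil] at h1
  rw [cCount_cons G c false hab, cCount_cons G c false hbd, cCount_cons G c false hda,
      cCount_nil] at h1
  rcases Bool.eq_false_or_eq_true (c ⟨s(a,b), hab⟩) with h | h <;>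
    rcases Bool.eq_false_or_eq_true (c ⟨s(b,d), hbd⟩) with h' | h' <;>
    rcases Bool.eq_false_or_eq_true (c ⟨s(d,a), hda⟩) with h'' | h'' <;>
    simp [h, h', h''] at h1 ⊢

end NAC

namespace NAC

/-- `G'` on `Fin (n + k)` is obtained from `G` on `Fin n` by adding `k` new vertices and
exactly the edges in the list `L`. -/
def ExtendsBy {n k : ℕ} (G : SimpleGraph (Fin n)) (G' : SimpleGraph (Fin (n + k)))
    (L : List (Fin (n + k) × Fin (n + k))) : Prop :=
  ∀ x y : Fin (n + k), G'.Adj x y ↔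
    ((∃ hx : x.val < n, ∃ hy : y.val < n, G.Adj ⟨x.val, hx⟩ ⟨y.val, hy⟩) ∨
      (x, y) ∈ L ∨ (y, x) ∈ L)

/-- 2-trees: graphs obtained from a single edge by repeatedly adding a new vertex joined
to both endpoints of an existing edge. -/
inductive IsTwoTree : ∀ {n : ℕ}, SimpleGraph (Fin n) → Prop
  | base : IsTwoTree (⊤ : SimpleGraph (Fin 2))
  | glue {n : ℕ} {G : SimpleGraph (Fin n)} {G' : SimpleGraph (Fin (n + 1))}
      (hG : IsTwoTree G) (u v : Fin n) (huv : G.Adj u v)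
      (hext : ExtendsBy G G' [(u.castAdd 1, Fin.last n), (v.castAdd 1, Fin.last n)]) :
      IsTwoTree G'

lemma twoTree_const {n : ℕ} {H : SimpleGraph (Fin n)} (hH : IsTwoTree H) :
    ∀ c : H.edgeSet → Bool,
      (∀ ⦃u⦄ (w : H.Walk u u), w.IsCycle →
        cCount H c true w.edges ≠ 1 ∧ cCount H c false w.edges ≠ 1) →
      ∀ e e', c e = c e' := by
  induction hH with
  | base =>
    rintro c - ⟨e, he⟩ ⟨e', he'⟩
    congr 1
    revert he he'
    induction e using Sym2.ind with | _ x y =>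
    induction e' using Sym2.ind with | _ x' y' =>
    intro he he'
    rw [SimpleGraph.mem_edgeSet, SimpleGraph.top_adj] at he he'
    revert he he'
    revert x y x' y'
    decide
  | @glue n G G' hG u v huv hext ih =>
    intro c hc
    -- the embedding of G into G'
    have hmono : ∀ {x y : Fin n}, G.Adj x y → G'.Adj (x.castAdd 1) (y.castAdd 1) := by
      intro x y hxy
      exact (hext _ _).mpr (Or.inl ⟨x.isLt, y.isLt, hxy⟩)
    set f : G →g G' := ⟨Fin.castAdd 1, fun h => hmono h⟩ with hf
    have hfinj : Function.Injective f := by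
      intro a b h
      have h' : (f a).val = (f b).val := congrArg Fin.val h
      exact Fin.ext h'
    set c₀ : G.edgeSet → Bool := fun e => c (f.mapEdgeSet e) with hc₀def
    have hc₀ : ∀ ⦃u⦄ (w : G.Walk u u), w.IsCycle →
        cCount G c₀ true w.edges ≠ 1 ∧ cCount G c₀ false w.edges ≠ 1 := by
      intro a w hw
      have hw' : (w.map f).IsCycle := hw.map hfinj
      have := hc (w.map f) hw'
      rwa [SimpleGraph.Walk.edges_map,
        cCount_map f c true w.edges (fun e he => w.edges_subset_edgeSet he),
        cCount_map f c false w.edges (fun e he => w.edges_subset_edgeSet he)] at this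
    have hconst₀ := ih c₀ hc₀
    -- the triangle
    have hcuv : G'.Adj (u.castAdd 1) (v.castAdd 1) := hmono huv
    have h1 : G'.Adj (v.castAdd 1) (Fin.last n) := by
      refine (hext _ _).mpr (Or.inr (Or.inl ?_))
      simp
    have h2 : G'.Adj (Fin.last n) (u.castAdd 1) := by
      refine (hext _ _).mpr (Or.inr (Or.inr ?_))
      simp
    obtain ⟨ht1, ht2⟩ := triangle_mono hc hcuv h1 h2
    -- every edge has the pivot colour
    have key : ∀ e : G'.edgeSet, c e = c ⟨s(u.castAdd 1, v.castAdd 1), hcuv⟩ := by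
      rintro ⟨e, he⟩
      revert he
      induction e using Sym2.ind with | _ x y =>
      intro he
      rw [SimpleGraph.mem_edgeSet] at he
      rcases (hext _ _).mp he with ⟨hx, hy, hadj⟩ | hL | hL
      · -- an old edge
        have hx' : x = f ⟨x.val, hx⟩ := Fin.ext rfl
        have hy' : y = f ⟨y.val, hy⟩ := Fin.ext rfl
        have heq : (⟨s(x, y), he⟩ : G'.edgeSet) = f.mapEdgeSet ⟨s(⟨x.val, hx⟩, ⟨y.val, hy⟩), hadj⟩ := by
          apply Subtype.ext
          show s(x, y) = Sym2.map f s(⟨x.val, hx⟩, ⟨y.val, hy⟩)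
          rw [Sym2.map_pair_eq, ← hx', ← hy']
        rw [heq]
        have h3 : (⟨s(u.castAdd 1, v.castAdd 1), hcuv⟩ : G'.edgeSet)
            = f.mapEdgeSet ⟨s(u, v), huv⟩ := by
          apply Subtype.ext
          show s(u.castAdd 1, v.castAdd 1) = Sym2.map f s(u, v)
          rw [Sym2.map_pair_eq]
          rfl
        rw [h3]
        exact hconst₀ _ _
      · simp only [List.mem_cons, List.mem_singleton, Prod.mk.injEq, List.not_mem_nil,
          or_false] at hL
        rcases hL with ⟨hxu, hyl⟩ | ⟨hxv, hyl⟩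
        · subst hxu; subst hyl
          have : (⟨s(u.castAdd 1, Fin.last n), he⟩ : G'.edgeSet)
              = ⟨s(Fin.last n, u.castAdd 1), h2⟩ := Subtype.ext (Sym2.eq_swap)
          rw [this, ← ht2]
        · subst hxv; subst hyl
          exact (congrArg c (Subtype.ext rfl : (⟨s(v.castAdd 1, Fin.last n), he⟩ : G'.edgeSet) = ⟨s(v.castAdd 1, Fin.last n), h1⟩)).trans ht1.symm
      · simp only [List.mem_cons, List.mem_singleton, Prod.mk.injEq, List.not_mem_nil,
          or_false] at hL
        rcases hL with ⟨hyu, hxl⟩ | ⟨hyv, hxl⟩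
        · subst hyu; subst hxl
          exact (congrArg c (Subtype.ext rfl : (⟨s(Fin.last n, u.castAdd 1), he⟩ : G'.edgeSet) = ⟨s(Fin.last n, u.castAdd 1), h2⟩)).trans ht2.symm
        · subst hyv; subst hxl
          have : (⟨s(Fin.last n, v.castAdd 1), he⟩ : G'.edgeSet)
              = ⟨s(v.castAdd 1, Fin.last n), h1⟩ := Subtype.ext (Sym2.eq_swap)
          rw [this, ← ht1]
    intro e e'
    rw [key e, key e']

end NAC

open NAC in
/-- No 2-tree on at least three vertices admits a NAC-colouring. -/
theorem statement6 {V : Type*} [Fintype V] (G : SimpleGraph V) {n : ℕ} (hn : 3 ≤ n)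
    (H : SimpleGraph (Fin n)) (hH : IsTwoTree H) (hiso : Nonempty (G ≃g H)) :
    ¬ ∃ c : G.edgeSet → Bool, IsNAC G c := by
  obtain ⟨φ⟩ := hiso
  rintro ⟨c, hsurj, hcyc⟩
  set f : H →g G := φ.symm.toHom with hf
  set c' : H.edgeSet → Bool := fun e => c (f.mapEdgeSet e) with hc'
  have hfinj : Function.Injective f := φ.symm.toEquiv.injective
  have hc'cyc : ∀ ⦃a⦄ (w : H.Walk a a), w.IsCycle →
      cCount H c' true w.edges ≠ 1 ∧ cCount H c' false w.edges ≠ 1 := by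
    intro a w hw
    have := hcyc (w.map f) (hw.map hfinj)
    rwa [SimpleGraph.Walk.edges_map,
      cCount_map f c true w.edges (fun e he => w.edges_subset_edgeSet he),
      cCount_map f c false w.edges (fun e he => w.edges_subset_edgeSet he)] at this
  have hconst := twoTree_const hH c' hc'cyc
  obtain ⟨et, het⟩ := hsurj true
  obtain ⟨ef, hef⟩ := hsurj false
  have push : ∀ e : G.edgeSet, c' (φ.toHom.mapEdgeSet e) = c e := by
    rintro ⟨e, he⟩
    show c (f.mapEdgeSet (φ.toHom.mapEdgeSet ⟨e, he⟩)) = c ⟨e, he⟩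
    congr 1
    apply Subtype.ext
    show Sym2.map f (Sym2.map φ e) = e
    rw [Sym2.map_map]
    have : (⇑f ∘ ⇑φ) = id := by
      funext x
      exact φ.symm_apply_apply x
    rw [this, Sym2.map_id, id]
  have : (true : Bool) = false := by
    rw [← het, ← hef, ← push et, ← push ef]
    exact hconst _ _
  exact Bool.noConfusion this
end

section
/- Let G be a connected graph whose blocks are B1, ..., Bk. Then nac(G) = (1/2)·∏_{i=1}^k (2·nac(B_i) + 2) − 1, where nac denotes the number of NAC-colourings divided by 2. -/
open scoped Classical

namespace NAC

/-- Two edges of `G` are related if they are equal or lie on a common cycle. The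
equivalence classes of this relation are the edge sets of the blocks of `G`. -/
def edgeRel (G : SimpleGraph V) (e f : Sym2 V) : Prop :=
  e = f ∨ ∃ (a : V) (w : G.Walk a a), w.IsCycle ∧ e ∈ w.edges ∧ f ∈ w.edges

end NAC

namespace NACAux

open SimpleGraph Walk NAC

variable {V : Type*} {G : SimpleGraph V}

lemma end_mem_tail_support {u v : V} (w : G.Walk u v) (h : ¬ w.Nil) :
    v ∈ w.support.tail := by
  cases w with
  | nil => simp at h
  | cons h' p => simpa using p.end_mem_support

lemma mem_support_iff_mem_tail {u : V} (w : G.Walk u u) (h : ¬ w.Nil) (v : V) :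
    v ∈ w.support ↔ v ∈ w.support.tail := by
  rw [support_eq_cons]
  constructor
  · rintro hv
    rcases List.mem_cons.mp hv with rfl | hv
    · exact end_mem_tail_support w h
    · exact hv
  · intro hv; exact List.mem_cons_of_mem _ hv

lemma mem_support_rotate {u x : V} {c : G.Walk u u} (hc : c.IsCycle) (h : x ∈ c.support)
    (v : V) : v ∈ (c.rotate x h).support ↔ v ∈ c.support := by
  have h1 : ¬ c.Nil := hc.not_nil
  have h2 : ¬ (c.rotate x h).Nil := (hc.rotate h).not_nil
  rw [mem_support_iff_mem_tail _ h1, mem_support_iff_mem_tail _ h2,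
    (support_rotate c x h).mem_iff]

lemma exists_prefix_firstHit {S : Set V} :
    ∀ {a b : V} (W : G.Walk a b), (∃ v ∈ W.support, v ∈ S) →
      ∃ (q : V) (Q : G.Walk a q) (R : G.Walk q b), q ∈ S ∧ Q.append R = W ∧
        (∀ x ∈ Q.support, x ∈ S → x = q) := by
  intro a b W
  induction W with
  | nil =>
    intro h
    obtain ⟨v, hv, hvS⟩ := h
    simp only [support_nil, List.mem_singleton] at hv
    subst hv
    exact ⟨_, Walk.nil, Walk.nil, hvS, rfl, by simp⟩
  | @cons a c b h' W' ih =>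
    intro h
    by_cases ha : a ∈ S
    · exact ⟨a, Walk.nil, Walk.cons h' W', ha, rfl, by simp⟩
    · have : ∃ v ∈ W'.support, v ∈ S := by
        obtain ⟨v, hv, hvS⟩ := h
        simp only [support_cons, List.mem_cons] at hv
        rcases hv with rfl | hv
        · exact absurd hvS ha
        · exact ⟨v, hv, hvS⟩
      obtain ⟨q, Q, R, hq, hQR, hfirst⟩ := ih this
      refine ⟨q, Walk.cons h' Q, R, hq, by rw [cons_append, hQR], ?_⟩
      intro x hx hxS
      simp only [support_cons, List.mem_cons] at hx
      rcases hx with rfl | hx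
      · exact absurd hxS ha
      · exact hfirst x hx hxS

lemma exists_incident_edge {u v : V} (w : G.Walk u v) (h : ¬ w.Nil) :
    ∀ x ∈ w.support, ∃ f ∈ w.edges, x ∈ f := by
  induction w with
  | nil => simp at h
  | @cons a c b h' W' ih =>
    intro x hx
    simp only [support_cons, List.mem_cons] at hx
    rcases hx with rfl | hx
    · exact ⟨s(x, c), by simp, by simp⟩
    · by_cases hn : W'.Nil
      · have : x = c := by
          cases W' with
          | nil => simpa using hx
          | cons h'' p => simp at hn
        subst this
        exact ⟨s(a, x), by simp, by simp⟩
      · obtain ⟨f, hf, hxf⟩ := ih hn x hx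
        exact ⟨f, by simp [hf], hxf⟩

lemma last_edge : ∀ {a b y : V} (Q : G.Walk a b), Q.IsPath → s(b, y) ∈ Q.edges →
    ∃ Q₀ : G.Walk a y, Q.edges = Q₀.edges ++ [s(y, b)] ∧ Q.support = Q₀.support ++ [b] := by
  intro a b y Q
  induction Q with
  | nil => simp
  | @cons a a' b h Q₁ ih =>
    intro hp hedge
    simp only [edges_cons, List.mem_cons] at hedge
    rcases hedge with hEq | hmem
    · rcases Sym2.eq_iff.mp hEq with ⟨rfl, rfl⟩ | ⟨rfl, rfl⟩
      · exfalso
        have := (cons_isPath_iff h Q₁).mp hp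
        exact this.2 (Q₁.end_mem_support)
      · have hQ₁ : Q₁ = Walk.nil := isPath_iff_eq_nil.mp hp.of_cons
        subst hQ₁
        exact ⟨Walk.nil, by simp [Sym2.eq_swap], by simp⟩
    · obtain ⟨Q₀, h1, h2⟩ := ih hp.of_cons hmem
      exact ⟨Walk.cons h Q₀, by simp [h1], by simp [h2]⟩

lemma cycle_split {x y : V} (C : G.Walk x x) (hC : C.IsCycle) (hg : s(x, y) ∈ C.edges) :
    ∃ P : G.Walk x y, P.IsPath ∧ C.edges.Perm (s(x, y) :: P.edges) := by
  cases C with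
  | nil => simp at hg
  | @cons _ z _ h C' =>
    obtain ⟨hC'path, hnotin⟩ := (cons_isCycle_iff C' h).mp hC
    simp only [edges_cons, List.mem_cons] at hg
    rcases hg with hEq | hmem
    · rcases Sym2.eq_iff.mp hEq with ⟨-, rfl⟩ | ⟨rfl, rfl⟩
      · exact ⟨C'.reverse, hC'path.reverse,
          by simp only [edges_cons, edges_reverse]
             exact List.Perm.cons _ C'.edges.reverse_perm.symm⟩
      · exact absurd rfl h.ne
    · obtain ⟨Q₀, hE, hS⟩ := last_edge C' hC'path hmem
      have hnd : (Q₀.support ++ [x]).Nodup := hS ▸ hC'path.support_nodup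
      have hQ₀ : Q₀.IsPath := by
        rw [isPath_def]; exact hnd.of_append_left
      have hxQ₀ : x ∉ Q₀.support := by
        have := List.disjoint_of_nodup_append hnd
        intro hx; exact this hx (by simp)
      refine ⟨Walk.cons h Q₀, (cons_isPath_iff h Q₀).mpr ⟨hQ₀, hxQ₀⟩, ?_⟩
      simp only [edges_cons, hE]
      rw [show s(x, y) = s(y, x) from Sym2.eq_swap]
      exact (List.Perm.cons _ (List.perm_append_comm (l₂ := [s(y, x)]))).trans
        (List.Perm.swap _ _ _)

lemma merge_cycles {e f g : Sym2 V} {a b : V}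
    (C₁ : G.Walk a a) (h₁ : C₁.IsCycle) (he : e ∈ C₁.edges) (hf : f ∈ C₁.edges)
    (C₂ : G.Walk b b) (h₂ : C₂.IsCycle) (hf₂ : f ∈ C₂.edges) (hg : g ∈ C₂.edges) :
    edgeRel G e g := by
  by_cases hgC₁ : g ∈ C₁.edges
  · exact Or.inr ⟨a, C₁, h₁, he, hgC₁⟩
  have hfg : f ≠ g := fun h => hgC₁ (h ▸ hf)
  induction g using Sym2.ind with | _ x y => ?_
  have hx : x ∈ C₂.support := C₂.fst_mem_support_of_mem_edges hg
  have hCcyc : (C₂.rotate x hx).IsCycle := h₂.rotate hx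
  have hgC : s(x, y) ∈ (C₂.rotate x hx).edges := (rotate_edges C₂ x hx).mem_iff.mpr hg
  obtain ⟨P, hP, hperm⟩ := cycle_split (C₂.rotate x hx) hCcyc hgC
  have hfP : f ∈ P.edges := by
    have hfc : f ∈ (C₂.rotate x hx).edges := (rotate_edges C₂ x hx).mem_iff.mpr hf₂
    rcases List.mem_cons.mp (hperm.mem_iff.mp hfc) with h | h
    · exact absurd h hfg
    · exact h
  have hgP : s(x, y) ∉ P.edges := by
    have hnd : (s(x, y) :: P.edges).Nodup := hperm.nodup_iff.mp hCcyc.edges_nodup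
    exact (List.nodup_cons.mp hnd).1
  set S : Set V := {v | v ∈ C₁.support} with hSdef
  -- endpoints of f
  induction f using Sym2.ind with | _ u v => ?_
  have huv : u ≠ v := (P.adj_of_mem_edges hfP).ne
  have huS : u ∈ S := C₁.fst_mem_support_of_mem_edges hf
  have hvS : v ∈ S := C₁.snd_mem_support_of_mem_edges hf
  have huP : u ∈ P.support := P.fst_mem_support_of_mem_edges hfP
  have hvP : v ∈ P.support := P.snd_mem_support_of_mem_edges hfP
  -- first hit of S along P
  obtain ⟨p, Q₁, R, hpS, hQR, hfirst₁⟩ := exists_prefix_firstHit P ⟨u, huP, huS⟩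
  have hPsupp : P.support = Q₁.support ++ R.support.tail := by rw [← hQR, support_append]
  have hPnd : P.support.Nodup := hP.support_nodup
  have hPnd' : (Q₁.support ++ R.support.tail).Nodup := hPsupp ▸ hPnd
  have hQ₁path : Q₁.IsPath := by rw [isPath_def]; exact hPnd'.of_append_left
  have hdisj1 : Q₁.support.Disjoint R.support.tail := List.disjoint_of_nodup_append hPnd'
  have hpR : p ∉ R.support.tail := fun h => hdisj1 Q₁.end_mem_support h
  have hRpath : R.IsPath := by
    rw [isPath_def, support_eq_cons]
    exact List.nodup_cons.mpr ⟨hpR, hPnd'.of_append_right⟩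
  -- a vertex of S on R other than p
  have hmemR : ∀ z, z ∈ S → z ≠ p → z ∈ P.support → z ∈ R.support := by
    intro z hzS hzp hzP
    rw [hPsupp, List.mem_append] at hzP
    rcases hzP with h | h
    · exact absurd (hfirst₁ z h hzS) hzp
    · exact List.mem_of_mem_tail h
  obtain ⟨w₀, hw₀S, hw₀p, hw₀R⟩ : ∃ w₀, w₀ ∈ S ∧ w₀ ≠ p ∧ w₀ ∈ R.support := by
    by_cases hup : u = p
    · exact ⟨v, hvS, fun h => huv (hup ▸ h ▸ rfl), hmemR v hvS (fun h => huv (hup ▸ h ▸ rfl)) hvP⟩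
    · exact ⟨u, huS, hup, hmemR u huS hup huP⟩
  -- first hit of S along R.reverse
  obtain ⟨q, Q₂, R₂, hqS, hQ2R2, hfirst₂⟩ := exists_prefix_firstHit R.reverse
    ⟨w₀, by rw [support_reverse, List.mem_reverse]; exact hw₀R, hw₀S⟩
  have hRrevsupp : R.reverse.support = Q₂.support ++ R₂.support.tail := by
    rw [← hQ2R2, support_append]
  have hRrevnd : (Q₂.support ++ R₂.support.tail).Nodup := hRrevsupp ▸ hRpath.reverse.support_nodup
  have hQ₂path : Q₂.IsPath := by rw [isPath_def]; exact hRrevnd.of_append_left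
  have hqR₂ : q ∉ R₂.support.tail := fun h =>
    (List.disjoint_of_nodup_append hRrevnd) Q₂.end_mem_support h
  have hR₂path : R₂.IsPath := by
    rw [isPath_def, support_eq_cons]
    exact List.nodup_cons.mpr ⟨hqR₂, hRrevnd.of_append_right⟩
  have hQ₂subR : ∀ z ∈ Q₂.support, z ∈ R.support := by
    intro z hz
    have : z ∈ R.reverse.support := hRrevsupp ▸ List.mem_append_left _ hz
    rwa [support_reverse, List.mem_reverse] at this
  have hqp : q ≠ p := by
    intro h
    subst h
    have hRnil : R₂ = Walk.nil := isPath_iff_eq_nil.mp hR₂path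
    have hw₀Q₂ : w₀ ∈ Q₂.support := by
      have : w₀ ∈ R.reverse.support := by
        rw [support_reverse, List.mem_reverse]; exact hw₀R
      rw [hRrevsupp, hRnil] at this
      simpa using this
    exact hw₀p (hfirst₂ w₀ hw₀Q₂ hw₀S)
  -- rotate C₁ at p and split at q
  have hpC₁ : p ∈ C₁.support := hpS
  have hc₁cyc : (C₁.rotate p hpC₁).IsCycle := h₁.rotate hpC₁
  have hec₁ : e ∈ (C₁.rotate p hpC₁).edges := (rotate_edges C₁ p hpC₁).mem_iff.mpr he
  have hc₁S : ∀ z ∈ (C₁.rotate p hpC₁).support, z ∈ S :=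
    fun z hz => (mem_support_rotate h₁ hpC₁ z).mp hz
  have hqc₁ : q ∈ (C₁.rotate p hpC₁).support := (mem_support_rotate h₁ hpC₁ q).mpr hqS
  set c₁ := C₁.rotate p hpC₁ with hc₁def
  have hspec : (c₁.takeUntil q hqc₁).append (c₁.dropUntil q hqc₁) = c₁ := take_spec c₁ hqc₁
  set A₁ := c₁.takeUntil q hqc₁ with hA₁def
  set A₂ := c₁.dropUntil q hqc₁ with hA₂def
  have hc₁supp : c₁.support = A₁.support ++ A₂.support.tail := by rw [← hspec, support_append]
  have hT : c₁.support.tail = A₁.support.tail ++ A₂.support.tail := by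
    rw [support_eq_cons A₁, List.cons_append] at hc₁supp
    have := congrArg List.tail hc₁supp
    simpa using this
  have hTnd : (A₁.support.tail ++ A₂.support.tail).Nodup := hT ▸ hc₁cyc.support_nodup
  have hA₁nonnil : ¬ A₁.Nil := not_nil_of_ne (fun h => hqp (h.symm))
  have hA₂nonnil : ¬ A₂.Nil := not_nil_of_ne hqp
  have hqT₁ : q ∈ A₁.support.tail := end_mem_tail_support A₁ hA₁nonnil
  have hpT₂ : p ∈ A₂.support.tail := end_mem_tail_support A₂ hA₂nonnil
  have hdisjT := List.disjoint_of_nodup_append hTnd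
  have hpT₁ : p ∉ A₁.support.tail := fun h => hdisjT h hpT₂
  have hqT₂ : q ∉ A₂.support.tail := fun h => hdisjT hqT₁ h
  have hA₁path : A₁.IsPath := by
    rw [isPath_def, support_eq_cons]
    exact List.nodup_cons.mpr ⟨hpT₁, hTnd.of_append_left⟩
  have hA₂path : A₂.IsPath := by
    rw [isPath_def, support_eq_cons]
    exact List.nodup_cons.mpr ⟨hqT₂, hTnd.of_append_right⟩
  have hedges : c₁.edges = A₁.edges ++ A₂.edges := by rw [← hspec, edges_append]
  -- the arc A through e
  obtain ⟨A, hApath, heA, hAC₁, hAsupS⟩ :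
      ∃ A : G.Walk p q, A.IsPath ∧ e ∈ A.edges ∧ (∀ e' ∈ A.edges, e' ∈ C₁.edges) ∧
        (∀ z ∈ A.support, z ∈ S) := by
    have hesplit : e ∈ A₁.edges ∨ e ∈ A₂.edges := by
      rw [hedges] at hec₁; exact List.mem_append.mp hec₁
    rcases hesplit with h | h
    · refine ⟨A₁, hA₁path, h, ?_, ?_⟩
      · intro e' he'
        exact (rotate_edges C₁ p hpC₁).mem_iff.mp (c₁.edges_takeUntil_subset hqc₁ he')
      · intro z hz
        exact hc₁S z (c₁.support_takeUntil_subset hqc₁ hz)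
    · refine ⟨A₂.reverse, hA₂path.reverse, by rwa [edges_reverse, List.mem_reverse], ?_, ?_⟩
      · intro e' he'
        rw [edges_reverse, List.mem_reverse] at he'
        exact (rotate_edges C₁ p hpC₁).mem_iff.mp (c₁.edges_dropUntil_subset hqc₁ he')
      · intro z hz
        rw [support_reverse, List.mem_reverse] at hz
        exact hc₁S z (c₁.support_dropUntil_subset hqc₁ hz)
  -- edge list facts
  have hxy_eq : s(x, y) = s(y, x) := Sym2.eq_swap
  have hPedges : P.edges = Q₁.edges ++ R.edges := by rw [← hQR, edges_append]
  have hPednd : (Q₁.edges ++ R.edges).Nodup := hPedges ▸ hP.edges_nodup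
  have hdisjE : Q₁.edges.Disjoint R.edges := List.disjoint_of_nodup_append hPednd
  have hQ₂edsub : ∀ e' ∈ Q₂.reverse.edges, e' ∈ R.edges := by
    intro e' h
    rw [edges_reverse, List.mem_reverse] at h
    have h2 : e' ∈ R.reverse.edges := by
      rw [← hQ2R2, edges_append]; exact List.mem_append_left _ h
    rwa [edges_reverse, List.mem_reverse] at h2
  have hAends : ∀ e' ∈ A.edges, ∀ z ∈ e', z ∈ S := by
    intro e'
    induction e' using Sym2.ind with | _ a' b' =>
    intro he' z hz
    rcases Sym2.mem_iff.mp hz with rfl | rfl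
    · exact hAsupS _ (A.fst_mem_support_of_mem_edges he')
    · exact hAsupS _ (A.snd_mem_support_of_mem_edges he')
  have hQ₁ends : ∀ e' ∈ Q₁.edges, ¬ (∀ z ∈ e', z ∈ S) := by
    intro e'
    induction e' using Sym2.ind with | _ a' b' =>
    intro he' hall
    have h1 : a' = p := hfirst₁ _ (Q₁.fst_mem_support_of_mem_edges he') (hall a' (by simp))
    have h2 : b' = p := hfirst₁ _ (Q₁.snd_mem_support_of_mem_edges he') (hall b' (by simp))
    exact (Q₁.adj_of_mem_edges he').ne (h1.trans h2.symm)
  have hQ₂ends : ∀ e' ∈ Q₂.edges, ¬ (∀ z ∈ e', z ∈ S) := by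
    intro e'
    induction e' using Sym2.ind with | _ a' b' =>
    intro he' hall
    have h1 : a' = q := hfirst₂ _ (Q₂.fst_mem_support_of_mem_edges he') (hall a' (by simp))
    have h2 : b' = q := hfirst₂ _ (Q₂.snd_mem_support_of_mem_edges he') (hall b' (by simp))
    exact (Q₂.adj_of_mem_edges he').ne (h1.trans h2.symm)
  have hgP' : s(y, x) ∉ P.edges := by rw [← hxy_eq]; exact hgP
  have hgQ₁ : s(y, x) ∉ Q₁.edges := fun h =>
    hgP' (by rw [hPedges]; exact List.mem_append_left _ h)
  have hgR : s(y, x) ∉ R.edges := fun h =>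
    hgP' (by rw [hPedges]; exact List.mem_append_right _ h)
  have hgA : s(y, x) ∉ A.edges := fun h => hgC₁ (by rw [hxy_eq]; exact hAC₁ _ h)
  -- the merged cycle
  have hadjxy : G.Adj x y := C₂.adj_of_mem_edges hg
  set W : G.Walk x x :=
    Q₁.append (A.append (Q₂.reverse.append (Walk.cons hadjxy.symm Walk.nil))) with hWdef
  have hWedges : W.edges = Q₁.edges ++ (A.edges ++ (Q₂.reverse.edges ++ [s(y, x)])) := by
    rw [hWdef, edges_append, edges_append, edges_append, edges_cons, edges_nil]
  have heW : e ∈ W.edges := by rw [hWedges]; simp [heA]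
  have hgW : s(x, y) ∈ W.edges := by rw [hWedges, hxy_eq]; simp
  have hWtrail : W.IsTrail := by
    refine ⟨?_⟩
    rw [hWedges]
    have nQ₁ : Q₁.edges.Nodup := hQ₁path.edges_nodup
    have nA : A.edges.Nodup := hApath.edges_nodup
    have nQ₂ : Q₂.reverse.edges.Nodup := hQ₂path.reverse.edges_nodup
    refine List.nodup_append.mpr ⟨nQ₁, List.nodup_append.mpr ⟨nA,
      List.nodup_append.mpr ⟨nQ₂, List.nodup_singleton _, ?_⟩, ?_⟩, ?_⟩
    · rintro z h1 _ h2 rfl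
      rw [List.mem_singleton] at h2
      subst h2
      exact hgR (hQ₂edsub _ h1)
    · rintro z h1 _ h2 rfl
      rcases List.mem_append.mp h2 with h2 | h2
      · exact hQ₂ends z (by rwa [edges_reverse, List.mem_reverse] at h2) (hAends z h1)
      · rw [List.mem_singleton] at h2; subst h2; exact hgA h1
    · rintro z h1 _ h2 rfl
      rcases List.mem_append.mp h2 with h2 | h2
      · exact hQ₁ends z h1 (hAends z h2)
      rcases List.mem_append.mp h2 with h2 | h2
      · exact hdisjE h1 (hQ₂edsub _ h2)
      · rw [List.mem_singleton] at h2; subst h2; exact hgQ₁ h1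
  have htail : ∀ {u' v' : V} (w' : G.Walk u' v') (L : List V),
      (w'.support ++ L).tail = w'.support.tail ++ L := by
    intro u' v' w' L; rw [support_eq_cons]; rfl
  have hWtail : W.support.tail =
      Q₁.support.tail ++ (A.support.tail ++ (Q₂.reverse.support.tail ++ [x])) := by
    rw [hWdef, support_append, support_append, support_append, support_cons, support_nil,
      List.tail_cons, htail Q₂.reverse, htail A, htail Q₁]
  have hTA_S : ∀ z ∈ A.support.tail, z ∈ S := fun z hz => hAsupS z (List.mem_of_mem_tail hz)
  have hpTA : p ∉ A.support.tail := by
    have h := hApath.support_nodup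
    rw [support_eq_cons] at h
    exact (List.nodup_cons.mp h).1
  have hqTQ : q ∉ Q₂.reverse.support.tail := by
    have h := hQ₂path.reverse.support_nodup
    rw [support_eq_cons] at h
    exact (List.nodup_cons.mp h).1
  have hTQ_mem : ∀ z ∈ Q₂.reverse.support.tail, z ∈ Q₂.support := by
    intro z hz
    have h := List.mem_of_mem_tail hz
    rwa [support_reverse, List.mem_reverse] at h
  have hTQ_nS : ∀ z ∈ Q₂.reverse.support.tail, z ∉ S := by
    intro z hz hzS
    have := hfirst₂ z (hTQ_mem z hz) hzS
    subst this
    exact hqTQ hz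
  have hTQ_R : ∀ z ∈ Q₂.reverse.support.tail, z ∈ R.support :=
    fun z hz => hQ₂subR z (hTQ_mem z hz)
  have cx1 : x ∉ Q₁.support.tail := by
    have h := hQ₁path.support_nodup
    rw [support_eq_cons] at h
    exact (List.nodup_cons.mp h).1
  have cx2 : x ∉ A.support.tail := by
    intro h
    have hxp : x = p := hfirst₁ x Q₁.start_mem_support (hTA_S x h)
    exact hpTA (hxp ▸ h)
  have cx3 : x ∉ Q₂.reverse.support.tail := by
    intro h
    have hxR := hTQ_R x h
    rw [support_eq_cons] at hxR
    rcases List.mem_cons.mp hxR with h' | h'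
    · exact hTQ_nS x h (h' ▸ hpS)
    · exact hdisj1 Q₁.start_mem_support h'
  have hWsupnd : W.support.tail.Nodup := by
    rw [hWtail]
    have nT1 : Q₁.support.tail.Nodup := (List.tail_sublist _).nodup hQ₁path.support_nodup
    have nTA : A.support.tail.Nodup := (List.tail_sublist _).nodup hApath.support_nodup
    have nTQ : Q₂.reverse.support.tail.Nodup :=
      (List.tail_sublist _).nodup hQ₂path.reverse.support_nodup
    refine List.nodup_append.mpr ⟨nT1, List.nodup_append.mpr ⟨nTA,
      List.nodup_append.mpr ⟨nTQ, List.nodup_singleton _, ?_⟩, ?_⟩, ?_⟩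
    · rintro z h1 _ h2 rfl
      rw [List.mem_singleton] at h2
      subst h2
      exact cx3 h1
    · rintro z h1 _ h2 rfl
      rcases List.mem_append.mp h2 with h2 | h2
      · exact hTQ_nS z h2 (hTA_S z h1)
      · rw [List.mem_singleton] at h2; subst h2; exact cx2 h1
    · rintro z h1 _ h2 rfl
      have hzQ₁ : z ∈ Q₁.support := List.mem_of_mem_tail h1
      rcases List.mem_append.mp h2 with h2 | h2
      · have hzS : z ∈ S := hTA_S z h2
        have : z = p := hfirst₁ z hzQ₁ hzS
        subst this
        exact hpTA h2
      rcases List.mem_append.mp h2 with h2 | h2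
      · have hzR := hTQ_R z h2
        rw [support_eq_cons] at hzR
        rcases List.mem_cons.mp hzR with h' | h'
        · exact hTQ_nS z h2 (h' ▸ hpS)
        · exact hdisj1 hzQ₁ h'
      · rw [List.mem_singleton] at h2; subst h2; exact cx1 h1
  have hWne : W ≠ Walk.nil := by
    intro h
    rw [h] at hgW
    simp at hgW
  exact Or.inr ⟨x, W, ⟨⟨hWtrail, hWne⟩, hWsupnd⟩, heW, hgW⟩

def liftWalk {H : G.Subgraph} : {u v : V} → (w : G.Walk u v) →
    (∀ e ∈ w.edges, e ∈ H.edgeSet) → (hu : u ∈ H.verts) → (hv : v ∈ H.verts) →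
    H.coe.Walk ⟨u, hu⟩ ⟨v, hv⟩
  | _, _, Walk.nil, _, _, _ => Walk.nil
  | _, _, Walk.cons (u := a) (v := c) h p, he, hu, hv =>
    have hadj : H.Adj a c := SimpleGraph.Subgraph.mem_edgeSet.mp (he s(a, c) (by simp))
    Walk.cons (by simpa using hadj)
      (liftWalk p (fun e hep => he e (by simp [hep])) hadj.snd_mem hv)

lemma liftWalk_map {H : G.Subgraph} {u v : V} (w : G.Walk u v)
    (he : ∀ e ∈ w.edges, e ∈ H.edgeSet) (hu : u ∈ H.verts) (hv : v ∈ H.verts) :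
    (liftWalk w he hu hv).map H.hom = w := by
  induction w with
  | nil => rfl
  | cons h p ih => simp [liftWalk, ih]

/-- restriction of a colouring to a subgraph -/
noncomputable def restrict (H : G.Subgraph) (c : G.edgeSet → Bool) :
    H.coe.edgeSet → Bool := fun ε =>
  c ⟨Sym2.map Subtype.val ε.1, H.edgeSet_subset (by
      have h2 : ε.1 ∈ Sym2.map (Subtype.val : H.verts → V) ⁻¹' H.edgeSet := by
        rw [← Subgraph.edgeSet_coe]; exact ε.2
      exact h2)⟩

lemma cCount_map {H : G.Subgraph} (c : G.edgeSet → Bool) (b : Bool)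
    {s t : H.verts} (w' : H.coe.Walk s t) :
    cCount G c b (w'.map H.hom).edges = cCount H.coe (restrict H c) b w'.edges := by
  unfold cCount
  rw [edges_map]
  have hm : (Sym2.map ⇑H.hom) = Sym2.map (Subtype.val : H.verts → V) := rfl
  rw [hm, List.filter_map, List.length_map]
  refine congrArg List.length (List.filter_congr ?_)
  intro ε hε
  have hεE : ε ∈ H.coe.edgeSet := w'.edges_subset_edgeSet hε
  have hGE : Sym2.map Subtype.val ε ∈ G.edgeSet := by
    refine H.edgeSet_subset ?_
    have h2 : ε ∈ Sym2.map (Subtype.val : H.verts → V) ⁻¹' H.edgeSet := by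
      rw [← Subgraph.edgeSet_coe]; exact hεE
    exact h2
  simp only [Function.comp_apply]
  rw [decide_eq_decide]
  constructor
  · rintro ⟨h1, hq⟩
    exact ⟨hεE, hq⟩
  · rintro ⟨h1, hq⟩
    exact ⟨hGE, hq⟩

lemma cCount_const_same {W : Type*} (H : SimpleGraph W) (b : Bool) {l : List (Sym2 W)}
    (hl : ∀ e ∈ l, e ∈ H.edgeSet) :
    cCount H (fun _ => b) b l = l.length := by
  unfold cCount
  rw [List.filter_eq_self.mpr]
  intro a ha
  exact decide_eq_true ⟨hl a ha, rfl⟩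

lemma cCount_const_other {W : Type*} (H : SimpleGraph W) (b : Bool) (l : List (Sym2 W)) :
    cCount H (fun _ => b) (!b) l = 0 := by
  unfold cCount
  rw [List.length_eq_zero_iff, List.filter_eq_nil_iff]
  intro a ha h
  rw [decide_eq_true_eq] at h
  obtain ⟨h1, h2⟩ := h
  simp at h2

lemma cCount_not {W : Type*} (H : SimpleGraph W) (c : H.edgeSet → Bool) (b : Bool)
    (l : List (Sym2 W)) :
    cCount H (fun e => !(c e)) b l = cCount H c (!b) l := by
  unfold cCount
  refine congrArg List.length (List.filter_congr ?_)
  intro a _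
  rw [decide_eq_decide]
  constructor
  · rintro ⟨h1, h2⟩
    refine ⟨h1, ?_⟩
    rw [← h2, Bool.not_not]
  · rintro ⟨h1, h2⟩
    refine ⟨h1, ?_⟩
    show Bool.not (c ⟨a, h1⟩) = b
    rw [h2, Bool.not_not]

lemma isNAC_not {W : Type*} {H : SimpleGraph W} {c : H.edgeSet → Bool}
    (h : IsNAC H c) : IsNAC H (fun e => !(c e)) := by
  obtain ⟨hsurj, hcyc⟩ := h
  constructor
  · intro b
    obtain ⟨e, he⟩ := hsurj (!b)
    exact ⟨e, by simp [he]⟩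
  · intro u w hw
    have h1 := hcyc w hw
    rw [cCount_not, cCount_not]
    exact ⟨h1.2, h1.1⟩

lemma even_ncard_isNAC {W : Type*} [Finite W] (H : SimpleGraph W) :
    Even {c : H.edgeSet → Bool | IsNAC H c}.ncard := by
  set N := {c : H.edgeSet → Bool | IsNAC H c} with hN
  rcases N.eq_empty_or_nonempty with h | h
  · rw [h]; simp
  obtain ⟨c₀, hc₀⟩ := h
  obtain ⟨e₀, -⟩ := hc₀.1 true
  set A := {c ∈ N | c e₀ = true} with hA
  set B := {c ∈ N | c e₀ = false} with hB
  have hop : ∀ c ∈ A, (fun e => !(c e)) ∈ B := by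
    rintro c ⟨h1, h2⟩
    exact ⟨isNAC_not h1, by simp [h2]⟩
  have hop' : ∀ c ∈ B, (fun e => !(c e)) ∈ A := by
    rintro c ⟨h1, h2⟩
    exact ⟨isNAC_not h1, by simp [h2]⟩
  have hsplit : N = A ∪ B := by
    ext c
    simp only [hA, hB, Set.mem_union, Set.mem_setOf_eq, Set.mem_sep_iff]
    constructor
    · intro hc
      cases hcb : c e₀
      · exact Or.inr ⟨hc, rfl⟩
      · exact Or.inl ⟨hc, rfl⟩
    · rintro (⟨h1, -⟩ | ⟨h1, -⟩) <;> exact h1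
  have hdisj : Disjoint A B := by
    rw [Set.disjoint_left]
    rintro c ⟨-, h2⟩ ⟨-, h3⟩
    rw [h2] at h3
    exact Bool.noConfusion h3
  have hAfin : A.Finite := Set.toFinite _
  have hBfin : B.Finite := Set.toFinite _
  have hcard : B = (fun c : H.edgeSet → Bool => fun e => !(c e)) '' A := by
    ext c
    constructor
    · intro hc
      refine ⟨fun e => !(c e), hop' c hc, ?_⟩
      funext e; simp
    · rintro ⟨d, hd, rfl⟩
      exact hop d hd
  have hinj : Function.Injective (fun c : H.edgeSet → Bool => fun e => !(c e)) := by
    intro c d h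
    funext e
    have := congrFun h e
    simpa using this
  have hcardeq : B.ncard = A.ncard := by
    rw [hcard, Set.ncard_image_of_injective _ hinj]
  rw [hsplit, Set.ncard_union_eq hdisj hAfin hBfin, hcardeq]
  exact ⟨A.ncard, rfl⟩

lemma vert_of_edge {H : G.Subgraph} {e : Sym2 V} (he : e ∈ H.edgeSet) {z : V} (hz : z ∈ e) :
    z ∈ H.verts := by
  induction e using Sym2.ind with | _ p q =>
  rw [Subgraph.mem_edgeSet] at he
  rcases Sym2.mem_iff.mp hz with rfl | rfl
  · exact he.fst_mem
  · exact he.snd_mem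

lemma coe_edge_mem {H : G.Subgraph} (η : Sym2 H.verts) (h : η ∈ H.coe.edgeSet) :
    Sym2.map Subtype.val η ∈ H.edgeSet := by
  rw [← Subgraph.image_coe_edgeSet_coe]
  exact ⟨η, h, rfl⟩


section Blocks

variable {k : ℕ} {B : Fin k → G.Subgraph}

lemma const_not_isNAC {W : Type*} (H : SimpleGraph W) (b : Bool) :
    ¬ IsNAC H (fun _ => b) := by
  intro h
  obtain ⟨x, hx⟩ := h.1 (!b)
  exact Bool.not_ne_self b (by rw [← hx])

lemma restrict_eval {H : G.Subgraph} (c : G.edgeSet → Bool) (η : H.coe.edgeSet)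
    (e : G.edgeSet) (h : e.1 = Sym2.map Subtype.val η.1) : restrict H c η = c e := by
  unfold restrict
  congr 1
  exact Subtype.ext h.symm

lemma sameBlock
    (hclass : ∀ i, ∃ e ∈ G.edgeSet, (B i).edgeSet = {f | f ∈ G.edgeSet ∧ edgeRel G e f})
    {a : V} {w : G.Walk a a} (hw : w.IsCycle) {f g : Sym2 V}
    (hf : f ∈ w.edges) (hg : g ∈ w.edges) {i : Fin k} (hfB : f ∈ (B i).edgeSet) :
    g ∈ (B i).edgeSet := by
  obtain ⟨e, heE, hset⟩ := hclass i
  rw [hset] at hfB ⊢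
  obtain ⟨hfE, hef⟩ := hfB
  refine ⟨w.edges_subset_edgeSet hg, ?_⟩
  rcases hef with rfl | ⟨a₁, w₁, hw₁, he₁, hf₁⟩
  · exact Or.inr ⟨a, w, hw, hf, hg⟩
  · exact merge_cycles w₁ hw₁ he₁ hf₁ w hw hf hg

lemma char_lemma
    (hclass : ∀ i, ∃ e ∈ G.edgeSet, (B i).edgeSet = {f | f ∈ G.edgeSet ∧ edgeRel G e f})
    (hcover : ∀ e ∈ G.edgeSet, ∃! i, e ∈ (B i).edgeSet)
    (c : G.edgeSet → Bool) :
    (IsNAC G c ∨ c = (fun _ => true) ∨ c = (fun _ => false)) ↔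
    (∀ i, IsNAC (B i).coe (restrict (B i) c) ∨
      restrict (B i) c = (fun _ => true) ∨ restrict (B i) c = (fun _ => false)) := by
  constructor
  · intro h i
    rcases h with hnac | rfl | rfl
    · by_cases hsurj : Function.Surjective (restrict (B i) c)
      · left
        refine ⟨hsurj, ?_⟩
        intro u w' hw'
        have hinj : Function.Injective ⇑(B i).hom := Subtype.val_injective
        have hmapc : (w'.map (B i).hom).IsCycle :=
          (Walk.map_isCycle_iff_of_injective hinj).mpr hw'
        have h1 := hnac.2 (w'.map (B i).hom) hmapc
        rw [cCount_map, cCount_map] at h1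
        exact h1
      · simp only [Function.Surjective, not_forall, not_exists] at hsurj
        obtain ⟨b, hb⟩ := hsurj
        cases b with
        | false =>
          right; left
          funext ε
          cases h' : restrict (B i) c ε with
          | false => exact absurd h' (hb ε)
          | true => rfl
        | true =>
          right; right
          funext ε
          cases h' : restrict (B i) c ε with
          | false => rfl
          | true => exact absurd h' (hb ε)
    · right; left; funext ε; rfl
    · right; right; funext ε; rfl
  · intro h
    by_cases hconst : c = (fun _ => true) ∨ c = (fun _ => false)
    · exact Or.inr hconst
    left
    push_neg at hconst
    obtain ⟨hct, hcf⟩ := hconst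
    have hsurj : Function.Surjective c := by
      intro b
      by_contra hb
      push_neg at hb
      cases b with
      | false =>
        apply hct
        funext e
        cases h' : c e with
        | false => exact absurd h' (hb e)
        | true => rfl
      | true =>
        apply hcf
        funext e
        cases h' : c e with
        | false => rfl
        | true => exact absurd h' (hb e)
    refine ⟨hsurj, ?_⟩
    intro u w hw
    have h3 := hw.three_le_length
    have hne : w.edges ≠ [] := by
      intro h0
      have hl := w.length_edges
      rw [h0] at hl
      simp at hl
      omega
    obtain ⟨f₀, hf₀⟩ := List.exists_mem_of_ne_nil _ hne
    obtain ⟨i, hiB, -⟩ := hcover f₀ (w.edges_subset_edgeSet hf₀)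
    have hall : ∀ e ∈ w.edges, e ∈ (B i).edgeSet := fun e he => sameBlock hclass hw hf₀ he hiB
    obtain ⟨f', hf', huf'⟩ := exists_incident_edge w hw.not_nil u w.start_mem_support
    have ha : u ∈ (B i).verts := vert_of_edge (hall f' hf') huf'
    have hmap : (liftWalk w hall ha ha).map (B i).hom = w := liftWalk_map w hall ha ha
    have hw' : (liftWalk w hall ha ha).IsCycle := by
      have hinj : Function.Injective ⇑(B i).hom := Subtype.val_injective
      rw [← Walk.map_isCycle_iff_of_injective hinj, hmap]
      exact hw
    have hcnt : ∀ b, cCount G c b w.edges =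
        cCount (B i).coe (restrict (B i) c) b (liftWalk w hall ha ha).edges := by
      intro b
      conv_lhs => rw [← hmap]
      exact cCount_map c b _
    have hlen : (liftWalk w hall ha ha).edges.length = w.length := by
      have h4 := congrArg Walk.length hmap
      rw [length_map] at h4
      exact (length_edges _).trans h4
    rcases h i with hnac' | hconst' | hconst'
    · have h1 := hnac'.2 (liftWalk w hall ha ha) hw'
      exact ⟨by rw [hcnt true]; exact h1.1, by rw [hcnt false]; exact h1.2⟩
    · constructor
      · rw [hcnt true, hconst',
          cCount_const_same _ _ (fun e he => Walk.edges_subset_edgeSet _ he)]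
        omega
      · rw [hcnt false, hconst']
        have h0 := cCount_const_other (B i).coe true (liftWalk w hall ha ha).edges
        simp only [Bool.not_true] at h0
        rw [h0]
        omega
    · constructor
      · rw [hcnt true, hconst']
        have h0 := cCount_const_other (B i).coe false (liftWalk w hall ha ha).edges
        simp only [Bool.not_false] at h0
        rw [h0]
        omega
      · rw [hcnt false, hconst',
          cCount_const_same _ _ (fun e he => Walk.edges_subset_edgeSet _ he)]
        omega

end Blocks

end NACAux

open NAC in
/-- If `B 0, …, B (k-1)` are the blocks of a connected graph `G`, then
`nac(G) = (1/2)·∏ᵢ (2·nac(Bᵢ) + 2) - 1`. -/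
theorem statement16 {V : Type*} [Fintype V] (G : SimpleGraph V) (hconn : G.Connected)
    (k : ℕ) (B : Fin k → G.Subgraph)
    (hclass : ∀ i, ∃ e ∈ G.edgeSet,
      (B i).edgeSet = {f | f ∈ G.edgeSet ∧ edgeRel G e f})
    (hcover : ∀ e ∈ G.edgeSet, ∃! i, e ∈ (B i).edgeSet)
    (hverts : ∀ i, (B i).verts = {x | ∃ y, (B i).Adj x y}) :
    nacNum G = (∏ i : Fin k, (2 * nacNum (B i).coe + 2)) / 2 - 1 := by
  classical
  rcases Nat.eq_zero_or_pos k with hk | hk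
  · subst hk
    have hempty : {c : G.edgeSet → Bool | IsNAC G c} = ∅ := by
      rw [Set.eq_empty_iff_forall_notMem]
      intro c hc
      obtain ⟨x, -⟩ := hc.1 true
      obtain ⟨i, -, -⟩ := hcover x.1 x.2
      exact i.elim0
    rw [show (∏ i : Fin 0, (2 * nacNum (B i).coe + 2)) = 1 from by simp]
    simp [nacNum, hempty]
  -- the colouring restriction map
  set Φfun : (G.edgeSet → Bool) → ∀ i, ((B i).coe.edgeSet → Bool) :=
    fun c i => NACAux.restrict (B i) c with hΦdef
  -- every block has an edge
  have hBedge : ∀ i, ∃ η : Sym2 (B i).verts, η ∈ (B i).coe.edgeSet := by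
    intro i
    obtain ⟨e, heE, hset⟩ := hclass i
    have he : e ∈ (B i).edgeSet := by rw [hset]; exact ⟨heE, Or.inl rfl⟩
    have himg : e ∈ Sym2.map (↑) '' (B i).coe.edgeSet := by
      rw [SimpleGraph.Subgraph.image_coe_edgeSet_coe]; exact he
    obtain ⟨η, hη, -⟩ := himg
    exact ⟨η, hη⟩
  have hGedge : ∃ e, e ∈ G.edgeSet := by
    obtain ⟨e, heE, -⟩ := hclass ⟨0, hk⟩
    exact ⟨e, heE⟩
  -- injectivity of Φfun
  have hinjΦ : Function.Injective Φfun := by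
    intro c₁ c₂ h
    funext e
    obtain ⟨i, hi, -⟩ := hcover e.1 e.2
    have himg : e.1 ∈ Sym2.map (↑) '' (B i).coe.edgeSet := by
      rw [SimpleGraph.Subgraph.image_coe_edgeSet_coe]; exact hi
    obtain ⟨η, hη, hm⟩ := himg
    have h2 := congrFun (congrFun h i) ⟨η, hη⟩
    have he1 : (⟨Sym2.map Subtype.val η,
        (B i).edgeSet_subset (NACAux.coe_edge_mem η hη)⟩ : G.edgeSet) = e := Subtype.ext hm
    have h3 : c₁ ⟨Sym2.map Subtype.val η,
        (B i).edgeSet_subset (NACAux.coe_edge_mem η hη)⟩ =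
        c₂ ⟨Sym2.map Subtype.val η, (B i).edgeSet_subset (NACAux.coe_edge_mem η hη)⟩ := h2
    rw [he1] at h3
    exact h3
  -- surjectivity of Φfun
  have hsurjΦ : Function.Surjective Φfun := by
    intro f
    have hex : ∀ e : G.edgeSet, ∃ (i : Fin k) (ε : Sym2 (B i).verts),
        ε ∈ (B i).coe.edgeSet ∧ Sym2.map Subtype.val ε = e.1 := by
      intro e
      obtain ⟨i, hi, -⟩ := hcover e.1 e.2
      have himg : e.1 ∈ Sym2.map (↑) '' (B i).coe.edgeSet := by
        rw [SimpleGraph.Subgraph.image_coe_edgeSet_coe]; exact hi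
      obtain ⟨ε, hε, hmap⟩ := himg
      exact ⟨i, ε, hε, hmap⟩
    choose idx ε hε hmap using hex
    refine ⟨fun e => f (idx e) ⟨ε e, hε e⟩, ?_⟩
    funext i η
    obtain ⟨e', he'⟩ : ∃ e' : G.edgeSet, e'.1 = Sym2.map Subtype.val η.1 :=
      ⟨⟨Sym2.map Subtype.val η.1, (B i).edgeSet_subset (NACAux.coe_edge_mem η.1 η.2)⟩, rfl⟩
    have h1 : Φfun (fun e => f (idx e) ⟨ε e, hε e⟩) i η =
        f (idx e') ⟨ε e', hε e'⟩ := NACAux.restrict_eval _ η e' he'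
    rw [h1]
    obtain ⟨j, hj, huniq⟩ := hcover e'.1 e'.2
    have hidx : idx e' = j := by
      apply huniq
      rw [← hmap e']
      exact NACAux.coe_edge_mem _ (hε e')
    have hieq : i = j := by
      apply huniq
      rw [he']
      exact NACAux.coe_edge_mem _ η.2
    have hie : idx e' = i := hidx.trans hieq.symm
    subst hie
    congr 1
    apply Subtype.ext
    apply Sym2.map.injective Subtype.val_injective
    rw [hmap e', he']
  -- the sets
  set N : Set (G.edgeSet → Bool) := {c | IsNAC G c} with hNdef
  set T : Set (G.edgeSet → Bool) :=
    {c | IsNAC G c ∨ c = (fun _ => true) ∨ c = (fun _ => false)} with hTdef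
  set S : ∀ i : Fin k, Set ((B i).coe.edgeSet → Bool) := fun i =>
    {f | IsNAC (B i).coe f ∨ f = (fun _ => true) ∨ f = (fun _ => false)} with hSdef
  have hTcard : T.ncard = N.ncard + 2 := by
    have hT : T = N ∪ {(fun _ => true), (fun _ => false)} := by
      ext c
      simp only [hTdef, hNdef, Set.mem_union, Set.mem_setOf_eq, Set.mem_insert_iff,
        Set.mem_singleton_iff]
    have hdisj : Disjoint N {(fun (_ : G.edgeSet) => true), (fun _ => false)} := by
      rw [Set.disjoint_left]
      intro c hc hmem
      rcases hmem with rfl | rfl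
      · exact NACAux.const_not_isNAC G true hc
      · exact NACAux.const_not_isNAC G false hc
    have hne : (fun (_ : G.edgeSet) => true) ≠ (fun _ => false) := by
      intro h
      obtain ⟨e, he⟩ := hGedge
      have := congrFun h ⟨e, he⟩
      simp at this
    rw [hT, Set.ncard_union_eq hdisj (Set.toFinite _) (Set.toFinite _), Set.ncard_pair hne]
  have hScard : ∀ i, (S i).ncard = {f | IsNAC (B i).coe f}.ncard + 2 := by
    intro i
    have hS : S i = {f | IsNAC (B i).coe f} ∪ {(fun _ => true), (fun _ => false)} := by
      ext f
      simp only [hSdef, Set.mem_union, Set.mem_setOf_eq, Set.mem_insert_iff,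
        Set.mem_singleton_iff]
    have hdisj : Disjoint {f | IsNAC (B i).coe f}
        {(fun (_ : (B i).coe.edgeSet) => true), (fun _ => false)} := by
      rw [Set.disjoint_left]
      intro f hf hmem
      rcases hmem with rfl | rfl
      · exact NACAux.const_not_isNAC (B i).coe true hf
      · exact NACAux.const_not_isNAC (B i).coe false hf
    have hne : (fun (_ : (B i).coe.edgeSet) => true) ≠ (fun _ => false) := by
      intro h
      obtain ⟨η, hη⟩ := hBedge i
      have := congrFun h ⟨η, hη⟩
      simp at this
    rw [hS, Set.ncard_union_eq hdisj (Set.toFinite _) (Set.toFinite _), Set.ncard_pair hne]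
  -- T has the product cardinality
  have hTmem : ∀ c, c ∈ T ↔ ∀ i, Φfun c i ∈ S i := fun c =>
    NACAux.char_lemma hclass hcover c
  set Φ : (G.edgeSet → Bool) ≃ ∀ i, ((B i).coe.edgeSet → Bool) :=
    Equiv.ofBijective _ ⟨hinjΦ, hsurjΦ⟩ with hΦeq
  have hTeq : T = Φ ⁻¹' (Set.univ.pi S) := by
    ext c
    rw [Set.mem_preimage, Set.mem_univ_pi]
    exact hTmem c
  have e1 : ↥T ≃ ↥(Set.univ.pi S) :=
    (Equiv.setCongr hTeq).trans (Equiv.subtypeEquiv Φ fun c => Iff.rfl)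
  have e2 : ↥(Set.univ.pi S) ≃ ∀ i, ↥(S i) :=
    ⟨fun f i => ⟨f.1 i, f.2 i (Set.mem_univ i)⟩,
     fun g => ⟨fun i => (g i).1, fun i _ => (g i).2⟩,
     fun f => rfl, fun g => rfl⟩
  have hTcard2 : T.ncard = ∏ i, (S i).ncard := by
    rw [← Nat.card_coe_set_eq, Nat.card_congr (e1.trans e2), Nat.card_pi]
    exact Finset.prod_congr rfl fun i _ => Nat.card_coe_set_eq _
  have hprod : ∀ i, 2 * nacNum (B i).coe + 2 = (S i).ncard := by
    intro i
    rw [hScard i]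
    obtain ⟨m, hm⟩ := NACAux.even_ncard_isNAC (B i).coe
    have : nacNum (B i).coe = {f | IsNAC (B i).coe f}.ncard / 2 := rfl
    omega
  have hTP : T.ncard = ∏ i, (2 * nacNum (B i).coe + 2) := by
    rw [hTcard2]
    exact (Finset.prod_congr rfl fun i _ => hprod i).symm
  have hdvd : 2 ∣ ∏ i : Fin k, (2 * nacNum (B i).coe + 2) :=
    dvd_trans ⟨nacNum (B ⟨0, hk⟩).coe + 1, by ring⟩
      (Finset.dvd_prod_of_mem _ (Finset.mem_univ (⟨0, hk⟩ : Fin k)))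
  obtain ⟨m, hm⟩ := hdvd
  have hgoal : nacNum G = N.ncard / 2 := rfl
  omega
end

section
/- The minimum number of complete bipartite subgraphs needed to cover all edges of the complete graph K_ℓ (the biclique covering number of K_ℓ) equals ⌈log₂ ℓ⌉. -/
/-- The biclique covering number of the complete graph `K_ℓ` equals `⌈log₂ ℓ⌉`:
`⌈log₂ ℓ⌉` is the least `k` for which there are complete bipartite subgraphs of `K_ℓ`
(given by disjoint pairs of parts `A i, B i`) covering all edges of `K_ℓ`. -/
theorem statement17 (l : ℕ) (hl : 1 ≤ l) :
    IsLeast {k : ℕ | ∃ A B : Fin k → Set (Fin l),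
        (∀ i, Disjoint (A i) (B i)) ∧
        ∀ u v : Fin l, u ≠ v →
          ∃ i, (u ∈ A i ∧ v ∈ B i) ∨ (u ∈ B i ∧ v ∈ A i)}
      (Nat.clog 2 l) := by
  constructor
  · -- membership: binary code construction
    refine ⟨fun i => {u | (u : ℕ).testBit i = false},
            fun i => {u | (u : ℕ).testBit i = true}, ?_, ?_⟩
    · intro i
      rw [Set.disjoint_left]
      intro u hu hu'
      simp only [Set.mem_setOf_eq] at hu hu'
      rw [hu] at hu'; exact Bool.false_ne_true hu'
    · intro u v huv
      have hne : (u : ℕ) ≠ (v : ℕ) := fun h => huv (Fin.ext h)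
      have : ¬ ∀ j, (u : ℕ).testBit j = (v : ℕ).testBit j :=
        fun h => hne (Nat.eq_of_testBit_eq h)
      push_neg at this
      obtain ⟨j, hj⟩ := this
      have hjlt : j < Nat.clog 2 l := by
        by_contra hge
        push_neg at hge
        have h2 : l ≤ 2 ^ j :=
          le_trans (Nat.le_pow_clog one_lt_two l) (Nat.pow_le_pow_right (by norm_num) hge)
        have hu0 := Nat.testBit_eq_false_of_lt (lt_of_lt_of_le u.isLt h2)
        have hv0 := Nat.testBit_eq_false_of_lt (lt_of_lt_of_le v.isLt h2)
        rw [hu0, hv0] at hj; exact hj rfl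
      refine ⟨⟨j, hjlt⟩, ?_⟩
      rcases Bool.eq_false_or_eq_true ((u : ℕ).testBit j) with hu | hu
      · right
        refine ⟨hu, ?_⟩
        show (v : ℕ).testBit j = false
        rw [hu] at hj
        cases hb : (v : ℕ).testBit j with
        | false => rfl
        | true => exact absurd hb.symm hj
      · left
        refine ⟨hu, ?_⟩
        show (v : ℕ).testBit j = true
        rw [hu] at hj
        cases hb : (v : ℕ).testBit j with
        | false => exact absurd rfl (fun h => hj (h.trans hb.symm))
        | true => rfl
  · -- lower bound
    rintro k ⟨A, B, hdisj, hcov⟩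
    classical
    have hinj : Function.Injective
        (fun u : Fin l => fun i : Fin k => decide (u ∈ A i)) := by
      intro u v h
      by_contra hne
      obtain ⟨i, hi⟩ := hcov u v hne
      have hfi : decide (u ∈ A i) = decide (v ∈ A i) := congrFun h i
      rcases hi with ⟨hu, hv⟩ | ⟨hu, hv⟩
      · have : decide (v ∈ A i) = true := by
          rw [← hfi]; exact decide_eq_true hu
        exact Set.disjoint_left.mp (hdisj i) (of_decide_eq_true this) hv
      · have : decide (u ∈ A i) = true := by
          rw [hfi]; exact decide_eq_true hv
        exact Set.disjoint_left.mp (hdisj i) (of_decide_eq_true this) hu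
    have hcard := Fintype.card_le_of_injective _ hinj
    simp only [Fintype.card_fin, Fintype.card_fun, Fintype.card_bool] at hcard
    exact (Nat.clog_le_iff_le_pow one_lt_two).mpr hcard
end
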